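/- Let n = p + q ≥ 3. The set of conformal Killing vector fields of the flat metric η on ℝⁿ is a real vector subspace of the space of smooth vector fields that is closed under the Lie bracket of vector fields [X,Y]ⁱ = Σ_j (X^j ∂_j Yⁱ − Y^j ∂_j Xⁱ), and its dimension equals (n+1)(n+2)/2. -/

import Mathlib

/-!
Write `φ = (2/n) div X` for the conformal factor. Differentiating the conformal Killing equation
`∂ᵢX_j + ∂ⱼXᵢ = φ ηᵢⱼ` and permuting the three indices gives
`2 ∂ᵢ∂ⱼX_k = η_jk ∂ᵢφ + η_ik ∂ⱼφ − η_ij ∂_kφ`. Differentiating once more and using the symmetry of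
third derivatives, all second derivatives of `φ` vanish as soon as `n ≥ 3`. So a smooth conformal
Killing field is determined by `X 0`, `∂X 0` and `∂φ 0`; matching these against the explicit fields
(translations, η-rotations, dilations, special conformal transformations) identifies the space with
a parameter space of dimension `n + n(n-1)/2 + 1 + n = (n+1)(n+2)/2`.

The bracket is closed because the Jacobian of a conformal Killing field lies pointwise in the
conformal algebra `co(η)`, commutators of `co(η)` lie in `so(η)`, and the second-order terms of
`[X,Y]` contribute `(X φ_Y − Y φ_X) η`.
-/

open Matrix BigOperators

noncomputable section

/-- The partial derivative `∂_j f (x)` of a function on `ℝⁿ`. -/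
def pd {n : ℕ} (f : (Fin n → ℝ) → ℝ) (j : Fin n) (x : Fin n → ℝ) : ℝ :=
  fderiv ℝ f x (Pi.single j 1)

/-- Entries of the flat diagonal metric `η = diag(1,…,1,−1,…,−1)` with `p` entries `+1`. -/
def etaSign (p : ℕ) {n : ℕ} (i : Fin n) : ℝ := if (i : ℕ) < p then 1 else -1

/-- The divergence `Σ_k ∂_k X^k` of a vector field on `ℝⁿ`. -/
def divg {n : ℕ} (X : (Fin n → ℝ) → Fin n → ℝ) (x : Fin n → ℝ) : ℝ :=
  ∑ k, pd (fun y => X y k) k x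

/-- `X` is a conformal Killing vector field for the flat metric of signature `(p, n−p)`:
`∂ᵢX_j + ∂_jXᵢ = (2/n)(Σ_k ∂_k X^k) η_{ij}` where `X_j = η_{jj} X^j`. -/
def ConformalKilling (p : ℕ) {n : ℕ} (X : (Fin n → ℝ) → Fin n → ℝ) : Prop :=
  ∀ (x : Fin n → ℝ) (i j : Fin n),
    etaSign p j * pd (fun y => X y j) i x + etaSign p i * pd (fun y => X y i) j x
      = (2 / (n : ℝ)) * divg X x * (if i = j then etaSign p i else 0)

/-- The Lie bracket of vector fields `[X,Y]ⁱ = Σ_j (X^j ∂_j Yⁱ − Y^j ∂_j Xⁱ)`. -/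
def lieBracketVF {n : ℕ} (X Y : (Fin n → ℝ) → Fin n → ℝ) : (Fin n → ℝ) → Fin n → ℝ :=
  fun x i => ∑ j, (X x j * pd (fun y => Y y i) j x - Y x j * pd (fun y => X y i) j x)

open scoped ContDiff

section PartialDerivatives

variable {n : ℕ} {f g : (Fin n → ℝ) → ℝ} {x : Fin n → ℝ}

lemma pd_add (hf : DifferentiableAt ℝ f x) (hg : DifferentiableAt ℝ g x) (j : Fin n) :
    pd (fun y => f y + g y) j x = pd f j x + pd g j x := by
  simp [pd, fderiv_fun_add hf hg]

lemma pd_sub (hf : DifferentiableAt ℝ f x) (hg : DifferentiableAt ℝ g x) (j : Fin n) :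
    pd (fun y => f y - g y) j x = pd f j x - pd g j x := by
  simp [pd, fderiv_fun_sub hf hg]

lemma pd_const_mul (c : ℝ) (j : Fin n) : pd (fun y => c * f y) j x = c * pd f j x := by
  simp [pd, show (fun y => c * f y) = c • f from rfl, fderiv_const_smul_field]

lemma pd_mul_const (c : ℝ) (j : Fin n) : pd (fun y => f y * c) j x = pd f j x * c := by
  simpa only [mul_comm _ c] using pd_const_mul c j

lemma pd_mul (hf : DifferentiableAt ℝ f x) (hg : DifferentiableAt ℝ g x) (j : Fin n) :
    pd (fun y => f y * g y) j x = pd f j x * g x + f x * pd g j x := by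
  simp [pd, fderiv_fun_mul hf hg]; ring

lemma pd_const (c : ℝ) (j : Fin n) (x : Fin n → ℝ) : pd (fun _ => c) j x = 0 := by
  simp [pd]

lemma pd_sum {ι : Type*} (s : Finset ι) {f : ι → (Fin n → ℝ) → ℝ}
    (hf : ∀ i ∈ s, DifferentiableAt ℝ (f i) x) (j : Fin n) :
    pd (fun y => ∑ i ∈ s, f i y) j x = ∑ i ∈ s, pd (f i) j x := by
  simp [pd, fderiv_fun_sum hf]

lemma pd_apply (i j : Fin n) (x : Fin n → ℝ) :
    pd (fun y => y i) j x = if i = j then 1 else 0 := by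
  simp [pd, fderiv_apply, Pi.single_apply]

lemma pd_sum_mul (c : Fin n → ℝ) (j : Fin n) (x : Fin n → ℝ) :
    pd (fun y => ∑ m, c m * y m) j x = c j := by
  simp [pd_sum _ (fun m _ => (differentiableAt_apply m x).const_mul (c m)), pd_const_mul, pd_apply]

lemma pd_sum_mul_sq (c : Fin n → ℝ) (j : Fin n) (x : Fin n → ℝ) :
    pd (fun y => ∑ m, c m * y m * y m) j x = 2 * c j * x j := by
  rw [pd_sum _ (fun m _ => by fun_prop)]
  simp (disch := fun_prop) only [pd_mul, pd_const, pd_apply]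
  simp [Finset.sum_add_distrib]
  ring

lemma ContDiff.pd (hf : ContDiff ℝ ∞ f) (j : Fin n) : ContDiff ℝ ∞ (pd f j) :=
  (hf.fderiv_right le_rfl).clm_apply contDiff_const

lemma pd_pd_comm (hf : ContDiff ℝ ∞ f) (i j : Fin n) (x : Fin n → ℝ) :
    pd (pd f j) i x = pd (pd f i) j x := by
  have hdf : Differentiable ℝ (fderiv ℝ f) :=
    (hf.fderiv_right (m := ∞) le_rfl).differentiable (by simp)
  have hsnd (u v : Fin n → ℝ) :
      fderiv ℝ (fun y => fderiv ℝ f y v) x u = fderiv ℝ (fderiv ℝ f) x u v := by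
    simp [fderiv_clm_apply (hdf x) (differentiableAt_const v)]
  unfold pd
  rw [hsnd, hsnd]
  exact hf.contDiffAt.isSymmSndFDerivAt (by simp; exact ENat.LEInfty.out) _ _

lemma is_const_of_pd_eq_zero (hf : Differentiable ℝ f) (h : ∀ i x, pd f i x = 0)
    (x y : Fin n → ℝ) : f x = f y :=
  is_const_of_fderiv_eq_zero hf (fun z => ContinuousLinearMap.coe_injective <|
    LinearMap.pi_ext' fun i => LinearMap.ext_ring (by simpa [pd] using h i z)) x y

lemma eq_of_pd_eq (hf : Differentiable ℝ f) (hg : Differentiable ℝ g)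
    (h : ∀ i x, pd f i x = pd g i x) (h0 : f 0 = g 0) : f = g := by
  funext x
  have := is_const_of_pd_eq_zero (hf.fun_sub hg)
    (fun i y => by rw [pd_sub (hf y) (hg y), h, sub_self]) x 0
  linarith

end PartialDerivatives

section Metric

def eta (p : ℕ) {n : ℕ} : Matrix (Fin n) (Fin n) ℝ := diagonal (etaSign p)

variable (p : ℕ) {n : ℕ}

lemma eta_apply (i j : Fin n) : eta p i j = if i = j then etaSign p i else 0 :=
  diagonal_apply _ _ _

lemma etaSign_mul_self (i : Fin n) : etaSign p i * etaSign p i = 1 := by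
  unfold etaSign; split_ifs <;> norm_num

lemma etaSign_ne_zero (i : Fin n) : etaSign p i ≠ 0 := by
  unfold etaSign; split_ifs <;> norm_num

lemma eta_comm (i j : Fin n) : eta p i j = eta p j i := by
  simp only [eta_apply]; split_ifs with h h' h' <;> simp_all

-- The relation is the one imposed by the symmetry of third derivatives of a conformal Killing
-- field on the Hessian `P` of its conformal factor.
lemma eq_zero_of_eta_relation (hn : 3 ≤ n) {P : Fin n → Fin n → ℝ}
    (h : ∀ a b c k, eta p b k * P a c + eta p a c * P b k = eta p a k * P b c + eta p b c * P a k) :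
    P = 0 := by
  have hoff (u v : Fin n) (huv : u ≠ v) : P u v = 0 := by
    obtain ⟨i, hiu, hiv⟩ := Fin.exists_ne_and_ne_of_two_lt u v (by omega)
    have := h u i v i
    simp only [eta_apply, huv, hiv, hiu.symm, if_true, if_false] at this
    simpa [etaSign_ne_zero] using this
  have hdiag (l b : Fin n) (hbl : b ≠ l) : etaSign p l * P l l = -(etaSign p b * P b b) := by
    have := h l b l b
    simp only [eta_apply, hbl, hbl.symm, if_true, if_false] at this
    linear_combination (etaSign p l * etaSign p b) * this
      - (P l l * etaSign p l) * etaSign_mul_self p b - (P b b * etaSign p b) * etaSign_mul_self p l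
  funext i j
  by_cases hij : i = j
  · subst hij
    obtain ⟨b, hbi, -⟩ := Fin.exists_ne_and_ne_of_two_lt i i (by omega)
    obtain ⟨c, hci, hcb⟩ := Fin.exists_ne_and_ne_of_two_lt i b (by omega)
    have : etaSign p i * P i i = 0 := by
      linarith [hdiag i b hbi, hdiag i c hci, hdiag b c hcb]
    simpa [etaSign_ne_zero] using this
  · exact hoff i j hij

end Metric

section Structure

def conformalFactor {n : ℕ} (X : (Fin n → ℝ) → Fin n → ℝ) (x : Fin n → ℝ) : ℝ :=
  2 / n * divg X x

variable {p n : ℕ} {X Y : (Fin n → ℝ) → Fin n → ℝ}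

lemma conformalFactor_zero : conformalFactor (0 : (Fin n → ℝ) → Fin n → ℝ) = 0 := by
  funext x
  simp [conformalFactor, divg, pd_const]

lemma ConformalKilling.sym_pd_eq (hCK : ConformalKilling p X) (x : Fin n → ℝ) (i j : Fin n) :
    etaSign p j * pd (fun y => X y j) i x + etaSign p i * pd (fun y => X y i) j x
      = conformalFactor X x * eta p i j :=
  hCK x i j

lemma conformalFactor_eq_of_sym_pd_eq (hn : n ≠ 0) {f : (Fin n → ℝ) → ℝ}
    (h : ∀ x i j, etaSign p j * pd (fun y => X y j) i x + etaSign p i * pd (fun y => X y i) j x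
      = f x * eta p i j) :
    conformalFactor X = f := by
  funext x
  have hdiag (i : Fin n) : pd (fun y => X y i) i x = f x / 2 := by
    have := h x i i
    rw [eta_apply, if_pos rfl] at this
    exact mul_left_cancel₀ (etaSign_ne_zero p i) (by linear_combination this / 2)
  simp only [conformalFactor, divg, hdiag, Finset.sum_const, Finset.card_univ, Fintype.card_fin,
    nsmul_eq_mul]
  field_simp

lemma conformalKilling_of_sym_pd_eq {f : (Fin n → ℝ) → ℝ}
    (h : ∀ x i j, etaSign p j * pd (fun y => X y j) i x + etaSign p i * pd (fun y => X y i) j x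
      = f x * eta p i j) :
    ConformalKilling p X := by
  intro x i j
  have hn : n ≠ 0 := by rintro rfl; exact i.elim0
  rw [h x i j, ← conformalFactor_eq_of_sym_pd_eq hn h]
  rfl

lemma contDiff_conformalFactor (hX : ContDiff ℝ ∞ X) : ContDiff ℝ ∞ (conformalFactor X) :=
  contDiff_const.mul (ContDiff.sum fun k _ => (contDiff_pi.1 hX k).pd k)

namespace ConformalKilling

variable (hX : ContDiff ℝ ∞ X) (hCK : ConformalKilling p X)
include hX hCK

lemma pd_sym_pd_eq (x : Fin n → ℝ) (m i j : Fin n) :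
    etaSign p j * pd (pd (fun y => X y j) i) m x + etaSign p i * pd (pd (fun y => X y i) j) m x
      = eta p i j * pd (conformalFactor X) m x := by
  have hd (k l : Fin n) : DifferentiableAt ℝ (pd (fun y => X y k) l) x :=
    ((contDiff_pi.1 hX k).pd l).differentiable (by simp) x
  have h := congrArg (fun F => pd F m x) (funext fun y => hCK.sym_pd_eq y i j)
  beta_reduce at h
  rw [pd_add ((hd j i).const_mul _) ((hd i j).const_mul _), pd_const_mul, pd_const_mul,
    pd_mul_const] at h
  rw [h, mul_comm]

lemma pd_pd_eq (x : Fin n → ℝ) (i j k : Fin n) :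
    2 * etaSign p k * pd (pd (fun y => X y k) j) i x
      = eta p j k * pd (conformalFactor X) i x + eta p i k * pd (conformalFactor X) j x
        - eta p i j * pd (conformalFactor X) k x := by
  have hc (a b c : Fin n) := pd_pd_comm (contDiff_pi.1 hX c) a b x
  have h1 := hCK.pd_sym_pd_eq hX x i j k
  have h2 := hCK.pd_sym_pd_eq hX x j i k
  have h3 := hCK.pd_sym_pd_eq hX x k i j
  rw [hc j i k] at h2
  rw [hc k i j, hc k j i] at h3
  linear_combination h1 + h2 - h3

lemma pd_pd_pd_eq (x : Fin n → ℝ) (a b j k : Fin n) :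
    2 * etaSign p k * pd (pd (pd (fun y => X y k) j) b) a x
      = eta p j k * pd (pd (conformalFactor X) b) a x
        + eta p b k * pd (pd (conformalFactor X) j) a x
        - eta p b j * pd (pd (conformalFactor X) k) a x := by
  have hd (l : Fin n) : DifferentiableAt ℝ (pd (conformalFactor X) l) x :=
    ((contDiff_conformalFactor hX).pd l).differentiable (by simp) x
  have h := congrArg (fun F => pd F a x) (funext fun y => hCK.pd_pd_eq hX y b j k)
  beta_reduce at h
  rw [pd_const_mul, pd_sub (((hd b).const_mul _).fun_add ((hd j).const_mul _)) ((hd k).const_mul _),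
    pd_add ((hd b).const_mul _) ((hd j).const_mul _), pd_const_mul, pd_const_mul,
    pd_const_mul] at h
  rw [← h, mul_assoc]

lemma pd_pd_conformalFactor_eq_zero (hn : 3 ≤ n) (x : Fin n → ℝ) (i j : Fin n) :
    pd (pd (conformalFactor X) j) i x = 0 := by
  suffices (fun a b => pd (pd (conformalFactor X) b) a x) = 0 from congrFun (congrFun this i) j
  refine eq_zero_of_eta_relation p hn fun a b c k => ?_
  have h1 := hCK.pd_pd_pd_eq hX x a b c k
  have h2 := hCK.pd_pd_pd_eq hX x b a c k
  rw [pd_pd_comm ((contDiff_pi.1 hX k).pd c) a b,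
    pd_pd_comm (contDiff_conformalFactor hX) a b] at h1
  linear_combination h2 - h1

end ConformalKilling

lemma ConformalKilling.eq_of_jet_eq (hn : 3 ≤ n) (hX : ContDiff ℝ ∞ X) (hY : ContDiff ℝ ∞ Y)
    (hCKX : ConformalKilling p X) (hCKY : ConformalKilling p Y) (h0 : X 0 = Y 0)
    (h1 : ∀ i j, pd (fun y => X y i) j 0 = pd (fun y => Y y i) j 0)
    (h2 : ∀ j, pd (conformalFactor X) j 0 = pd (conformalFactor Y) j 0) :
    X = Y := by
  have hdiff {f : (Fin n → ℝ) → ℝ} (hf : ContDiff ℝ ∞ f) : Differentiable ℝ f :=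
    hf.differentiable (by simp)
  have hφ (j : Fin n) : pd (conformalFactor X) j = pd (conformalFactor Y) j :=
    eq_of_pd_eq (hdiff ((contDiff_conformalFactor hX).pd j))
      (hdiff ((contDiff_conformalFactor hY).pd j))
      (fun i x => by rw [hCKX.pd_pd_conformalFactor_eq_zero hX hn,
        hCKY.pd_pd_conformalFactor_eq_zero hY hn]) (h2 j)
  have hjac (i j : Fin n) : pd (fun y => X y i) j = pd (fun y => Y y i) j :=
    eq_of_pd_eq (hdiff ((contDiff_pi.1 hX i).pd j)) (hdiff ((contDiff_pi.1 hY i).pd j))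
      (fun m x => by
        have hX2 := hCKX.pd_pd_eq hX x m j i
        have hY2 := hCKY.pd_pd_eq hY x m j i
        simp only [hφ] at hX2
        exact mul_left_cancel₀ (mul_ne_zero two_ne_zero (etaSign_ne_zero p i))
          (hX2.trans hY2.symm))
      (h1 i j)
  funext x i
  exact congrFun (eq_of_pd_eq (hdiff (contDiff_pi.1 hX i)) (hdiff (contDiff_pi.1 hY i))
    (fun j x => congrFun (hjac i j) x) (congrFun h0 i)) x

end Structure

section Explicit

/-- Translation `a`, η-rotation `Ω` (skew, first index lowered), dilation `lam` and special
conformal transformation `b`. -/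
def ckField (p : ℕ) {n : ℕ} (a : Fin n → ℝ) (Ω : Fin n → Fin n → ℝ) (lam : ℝ) (b : Fin n → ℝ) :
    (Fin n → ℝ) → Fin n → ℝ :=
  fun x i => a i + etaSign p i * ∑ m, Ω i m * x m + lam * x i
    + 2 * (∑ m, etaSign p m * b m * x m) * x i - (∑ m, etaSign p m * x m * x m) * b i

variable {p n : ℕ} (a : Fin n → ℝ) (Ω : Fin n → Fin n → ℝ) (lam : ℝ) (b : Fin n → ℝ)

lemma contDiff_ckField : ContDiff ℝ ∞ (ckField p a Ω lam b) :=
  contDiff_pi.2 fun i => by unfold ckField; fun_prop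

lemma ckField_zero : ckField p a Ω lam b 0 = a := by
  funext i; simp [ckField]

lemma pd_ckField (x : Fin n → ℝ) (i j : Fin n) :
    pd (fun y => ckField p a Ω lam b y i) j x
      = etaSign p i * Ω i j + lam * (if i = j then 1 else 0)
        + 2 * (etaSign p j * b j * x i + (∑ m, etaSign p m * b m * x m) * (if i = j then 1 else 0))
        - 2 * etaSign p j * x j * b i := by
  unfold ckField
  simp (disch := fun_prop) only [pd_add, pd_sub, pd_mul, pd_const, pd_apply, pd_sum_mul,
    pd_sum_mul_sq]
  ring

lemma pd_ckField_zero (i j : Fin n) :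
    pd (fun y => ckField p a Ω lam b y i) j 0
      = etaSign p i * Ω i j + lam * (if i = j then 1 else 0) := by
  simp [pd_ckField]

variable {Ω} (hΩ : ∀ i j, Ω j i = -Ω i j)
include hΩ

lemma sym_pd_ckField (x : Fin n → ℝ) (i j : Fin n) :
    etaSign p j * pd (fun y => ckField p a Ω lam b y j) i x
        + etaSign p i * pd (fun y => ckField p a Ω lam b y i) j x
      = (2 * lam + 4 * ∑ m, etaSign p m * b m * x m) * eta p i j := by
  rw [pd_ckField, pd_ckField, eta_apply, hΩ]
  by_cases hij : i = j
  · subst hij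
    have hΩi : Ω i i = 0 := by linarith [hΩ i i]
    simp only [if_true, hΩi]
    ring
  · simp only [hij, Ne.symm hij, if_false]
    linear_combination Ω i j * etaSign_mul_self p i - Ω i j * etaSign_mul_self p j

lemma conformalKilling_ckField : ConformalKilling p (ckField p a Ω lam b) :=
  conformalKilling_of_sym_pd_eq (sym_pd_ckField a lam b hΩ)

lemma pd_conformalFactor_ckField (hn : n ≠ 0) (j : Fin n) (x : Fin n → ℝ) :
    pd (conformalFactor (ckField p a Ω lam b)) j x = 4 * (etaSign p j * b j) := by
  rw [conformalFactor_eq_of_sym_pd_eq hn (sym_pd_ckField a lam b hΩ)]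
  simp (disch := fun_prop) only [pd_add, pd_const_mul, pd_const, pd_sum_mul, mul_zero, zero_add]

end Explicit

section Bracket

lemma Matrix.isSkewAdjoint_commutator_of_conformal {ι R : Type*} [Fintype ι] [DecidableEq ι]
    [CommRing R] {J M N : Matrix ι ι R} {a b : R} (hM : J * M + Mᵀ * J = a • J)
    (hN : J * N + Nᵀ * J = b • J) : Matrix.IsSkewAdjoint J (M * N - N * M) := by
  have hM' : Mᵀ * J = a • J - J * M := eq_sub_of_add_eq' hM
  have hN' : Nᵀ * J = b • J - J * N := eq_sub_of_add_eq' hN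
  rw [Matrix.IsSkewAdjoint, Matrix.IsAdjointPair, transpose_sub, transpose_mul, transpose_mul,
    sub_mul, Matrix.mul_assoc, Matrix.mul_assoc, hM', hN']
  simp only [Matrix.mul_sub, Matrix.mul_smul, ← Matrix.mul_assoc, hM', hN', sub_mul, smul_mul,
    smul_sub, smul_smul, mul_comm a b]
  noncomm_ring

def jacobian {n : ℕ} (X : (Fin n → ℝ) → Fin n → ℝ) (x : Fin n → ℝ) : Matrix (Fin n) (Fin n) ℝ :=
  Matrix.of fun i j => pd (fun y => X y i) j x

variable {p n : ℕ} {X Y : (Fin n → ℝ) → Fin n → ℝ}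

lemma ConformalKilling.jacobian_conformal (hCK : ConformalKilling p X) (x : Fin n → ℝ) :
    eta p * jacobian X x + (jacobian X x)ᵀ * eta p = conformalFactor X x • eta p := by
  ext i j
  have := hCK.sym_pd_eq x j i
  rw [eta_comm] at this
  simp only [eta, jacobian, Matrix.add_apply, diagonal_mul, mul_diagonal, transpose_apply,
    of_apply, Matrix.smul_apply, smul_eq_mul] at this ⊢
  linear_combination this

lemma contDiff_lieBracketVF (hX : ContDiff ℝ ∞ X) (hY : ContDiff ℝ ∞ Y) :
    ContDiff ℝ ∞ (lieBracketVF X Y) :=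
  contDiff_pi.2 fun i => ContDiff.sum fun j _ =>
    ((contDiff_pi.1 hX j).mul ((contDiff_pi.1 hY i).pd j)).sub
      ((contDiff_pi.1 hY j).mul ((contDiff_pi.1 hX i).pd j))

lemma pd_lieBracketVF (hX : ContDiff ℝ ∞ X) (hY : ContDiff ℝ ∞ Y) (x : Fin n → ℝ) (c d : Fin n) :
    pd (fun y => lieBracketVF X Y y c) d x
      = (jacobian Y x * jacobian X x - jacobian X x * jacobian Y x) c d
        + ∑ m, (X x m * pd (pd (fun y => Y y c) d) m x
          - Y x m * pd (pd (fun y => X y c) d) m x) := by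
  have hdiff {f : (Fin n → ℝ) → ℝ} (hf : ContDiff ℝ ∞ f) : DifferentiableAt ℝ f x :=
    hf.differentiable (by simp) x
  have dX (k : Fin n) := hdiff (contDiff_pi.1 hX k)
  have dY (k : Fin n) := hdiff (contDiff_pi.1 hY k)
  have dpX (k l : Fin n) := hdiff ((contDiff_pi.1 hX k).pd l)
  have dpY (k l : Fin n) := hdiff ((contDiff_pi.1 hY k).pd l)
  unfold lieBracketVF
  rw [pd_sum _ fun m _ => ((dX m).fun_mul (dpY c m)).fun_sub ((dY m).fun_mul (dpX c m))]
  simp only [jacobian, Matrix.sub_apply, Matrix.mul_apply, of_apply, ← Finset.sum_sub_distrib,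
    ← Finset.sum_add_distrib]
  refine Finset.sum_congr rfl fun m _ => ?_
  rw [pd_sub ((dX m).fun_mul (dpY c m)) ((dY m).fun_mul (dpX c m)), pd_mul (dX m) (dpY c m),
    pd_mul (dY m) (dpX c m), pd_pd_comm (contDiff_pi.1 hY c) d m,
    pd_pd_comm (contDiff_pi.1 hX c) d m]
  ring

lemma ConformalKilling.lieBracketVF (hX : ContDiff ℝ ∞ X) (hY : ContDiff ℝ ∞ Y)
    (hCKX : ConformalKilling p X) (hCKY : ConformalKilling p Y) :
    ConformalKilling p (lieBracketVF X Y) := by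
  refine conformalKilling_of_sym_pd_eq (f := fun x => ∑ m,
    (X x m * pd (conformalFactor Y) m x - Y x m * pd (conformalFactor X) m x)) fun x i j => ?_
  have hskew := congrFun (congrFun (Matrix.isSkewAdjoint_commutator_of_conformal
    (hCKY.jacobian_conformal x) (hCKX.jacobian_conformal x)) j) i
  simp only [eta, mul_diagonal, diagonal_mul, transpose_apply, Matrix.neg_apply] at hskew
  have hsecond : etaSign p j * ∑ m, (X x m * pd (pd (fun y => Y y j) i) m x
        - Y x m * pd (pd (fun y => X y j) i) m x)
      + etaSign p i * ∑ m, (X x m * pd (pd (fun y => Y y i) j) m x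
        - Y x m * pd (pd (fun y => X y i) j) m x)
      = (∑ m, (X x m * pd (conformalFactor Y) m x - Y x m * pd (conformalFactor X) m x))
        * eta p i j := by
    rw [Finset.mul_sum, Finset.mul_sum, ← Finset.sum_add_distrib, Finset.sum_mul]
    refine Finset.sum_congr rfl fun m _ => ?_
    linear_combination X x m * hCKY.pd_sym_pd_eq hY x m i j
      - Y x m * hCKX.pd_sym_pd_eq hX x m i j
  rw [pd_lieBracketVF hX hY, pd_lieBracketVF hX hY]
  linear_combination hsecond + hskew

end Bracket

section Parametrization

abbrev UpperPairs (n : ℕ) : Type := {q : Fin n × Fin n // q.1 < q.2}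

def skewOfUpper {n : ℕ} : (UpperPairs n → ℝ) →ₗ[ℝ] Fin n → Fin n → ℝ where
  toFun u i j := if h : i < j then u ⟨(i, j), h⟩ else if h' : j < i then -u ⟨(j, i), h'⟩ else 0
  map_add' u v := by
    funext i j
    simp only [Pi.add_apply]
    split_ifs <;> ring
  map_smul' c u := by
    funext i j
    simp only [Pi.smul_apply, smul_eq_mul, RingHom.id_apply]
    split_ifs <;> ring

variable {p n : ℕ}

lemma skewOfUpper_upper (u : UpperPairs n → ℝ) (q : UpperPairs n) :
    skewOfUpper u q.1.1 q.1.2 = u q := by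
  simp [skewOfUpper, q.2]

lemma skewOfUpper_apply_self (u : UpperPairs n → ℝ) (i : Fin n) :
    skewOfUpper u i i = 0 := by
  simp [skewOfUpper]

lemma skewOfUpper_skew (u : UpperPairs n → ℝ) (i j : Fin n) :
    skewOfUpper u j i = -skewOfUpper u i j := by
  simp only [skewOfUpper, LinearMap.coe_mk, AddHom.coe_mk]
  rcases lt_trichotomy i j with h | rfl | h
  · simp [h, not_lt_of_gt h]
  · simp
  · simp [h, not_lt_of_gt h]

lemma skewOfUpper_of_skew {Ω : Fin n → Fin n → ℝ} (hΩ : ∀ i j, Ω j i = -Ω i j) :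
    skewOfUpper (fun q => Ω q.1.1 q.1.2) = Ω := by
  funext i j
  simp only [skewOfUpper, LinearMap.coe_mk, AddHom.coe_mk]
  rcases lt_trichotomy i j with h | rfl | h
  · simp [h]
  · simp; linarith [hΩ i i]
  · simp only [h, not_lt_of_gt h, dite_false, dite_true]
    rw [hΩ j i]

abbrev CKParams (n : ℕ) : Type :=
  (Fin n → ℝ) × (UpperPairs n → ℝ) × ℝ × (Fin n → ℝ)

def ckFieldMap (p n : ℕ) : CKParams n →ₗ[ℝ] (Fin n → ℝ) → Fin n → ℝ where
  toFun w := ckField p w.1 (skewOfUpper w.2.1) w.2.2.1 w.2.2.2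
  map_add' w w' := by
    funext x i
    simp only [ckField, Prod.fst_add, Prod.snd_add, map_add, Pi.add_apply, add_mul, mul_add,
      Finset.sum_add_distrib]
    ring
  map_smul' c w := by
    funext x i
    simp only [ckField, Prod.smul_fst, Prod.smul_snd, map_smul, Pi.smul_apply, smul_eq_mul,
      RingHom.id_apply, mul_left_comm _ c, mul_assoc, ← Finset.mul_sum]
    ring

lemma ckFieldMap_apply (w : CKParams n) :
    ckFieldMap p n w = ckField p w.1 (skewOfUpper w.2.1) w.2.2.1 w.2.2.2 := rfl

lemma finrank_ckParams : Module.finrank ℝ (CKParams n) = (n + 1) * (n + 2) / 2 := by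
  have h : (n + 2).choose 2 = n + (n.choose 2 + (1 + n)) := by
    simp [Nat.choose_succ_succ]; omega
  simp only [Module.finrank_prod, Module.finrank_fintype_fun_eq_card, Fintype.card_fin,
    Fintype.card_subtype, Fintype.card_product_filter_lt, Module.finrank_self]
  rw [← h, Nat.choose_two_right, mul_comm]
  rfl

lemma ckFieldMap_injective (hn : n ≠ 0) : Function.Injective (ckFieldMap p n) := by
  rw [← LinearMap.ker_eq_bot, Submodule.eq_bot_iff]
  rintro ⟨a, u, lam, b⟩ hw
  have hF : ckField p a (skewOfUpper u) lam b = 0 := hw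
  have hjet (i j : Fin n) :
      etaSign p i * skewOfUpper u i j + lam * (if i = j then 1 else 0) = 0 := by
    rw [← pd_ckField_zero a _ lam b i j, hF]
    exact pd_const 0 j 0
  have hlam : lam = 0 := by
    simpa [skewOfUpper_apply_self] using hjet ⟨0, Nat.pos_of_ne_zero hn⟩ ⟨0, Nat.pos_of_ne_zero hn⟩
  have hu : u = 0 := funext fun q => by
    have := hjet q.1.1 q.1.2
    rw [hlam, zero_mul, add_zero, skewOfUpper_upper] at this
    exact (mul_eq_zero.1 this).resolve_left (etaSign_ne_zero p _)
  have ha : a = 0 := by rw [← ckField_zero a (skewOfUpper u) lam b (p := p), hF]; rfl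
  have hb : b = 0 := funext fun j => by
    have := pd_conformalFactor_ckField (p := p) a lam b (skewOfUpper_skew u) hn j 0
    rw [hF, conformalFactor_zero, show pd 0 j 0 = 0 from pd_const 0 j 0] at this
    simpa [etaSign_ne_zero] using this.symm
  simp only [ha, hu, hlam, hb]
  rfl

lemma mem_range_ckFieldMap_iff (hn : 3 ≤ n) (X : (Fin n → ℝ) → Fin n → ℝ) :
    X ∈ LinearMap.range (ckFieldMap p n) ↔ ContDiff ℝ ∞ X ∧ ConformalKilling p X := by
  constructor
  · rintro ⟨⟨a, u, lam, b⟩, rfl⟩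
    exact ⟨contDiff_ckField _ _ _ _, conformalKilling_ckField a lam b (skewOfUpper_skew u)⟩
  rintro ⟨hX, hCK⟩
  set lam := conformalFactor X 0 / 2
  set Ω : Fin n → Fin n → ℝ := fun i j => etaSign p i * pd (fun y => X y i) j 0 - lam * eta p i j
  have hΩ (i j : Fin n) : Ω j i = -Ω i j := by
    simp only [Ω, lam, eta_comm p j i]
    linear_combination hCK.sym_pd_eq 0 i j
  set b : Fin n → ℝ := fun j => etaSign p j * pd (conformalFactor X) j 0 / 4
  refine ⟨(X 0, fun q => Ω q.1.1 q.1.2, lam, b), ?_⟩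
  rw [ckFieldMap_apply, skewOfUpper_of_skew hΩ]
  refine ConformalKilling.eq_of_jet_eq hn (contDiff_ckField _ _ _ _) hX
    (conformalKilling_ckField _ _ _ hΩ) hCK (ckField_zero _ _ _ _) (fun i j => ?_) (fun j => ?_)
  · rw [pd_ckField_zero]
    simp only [Ω, eta_apply]
    split_ifs
    · linear_combination (pd (fun y => X y i) j 0 - lam) * etaSign_mul_self p i
    · linear_combination pd (fun y => X y i) j 0 * etaSign_mul_self p i
  · rw [pd_conformalFactor_ckField _ _ _ hΩ (by omega)]
    simp only [b]
    linear_combination (pd (conformalFactor X) j 0) * etaSign_mul_self p j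

end Parametrization

/-- For `n = p + q ≥ 3`, the set of (smooth) conformal Killing vector fields of
the flat metric `η` on `ℝⁿ` is a real vector subspace of the space of vector fields, closed
under the Lie bracket of vector fields, and its dimension is `(n+1)(n+2)/2`. -/
theorem conformal_killing_subspace_bracket_closed_dim (p q : ℕ) (hn : 3 ≤ p + q) :
    ∃ S : Submodule ℝ ((Fin (p + q) → ℝ) → Fin (p + q) → ℝ),
      (∀ X, X ∈ S ↔ ContDiff ℝ (⊤ : ℕ∞) X ∧ ConformalKilling p X) ∧
      (∀ X Y, X ∈ S → Y ∈ S → lieBracketVF X Y ∈ S) ∧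
      Module.finrank ℝ S = (p + q + 1) * (p + q + 2) / 2 := by
  have hmem := mem_range_ckFieldMap_iff (p := p) hn
  refine ⟨LinearMap.range (ckFieldMap p (p + q)), hmem, fun X Y hX hY => ?_, ?_⟩
  · obtain ⟨hXs, hXc⟩ := (hmem X).1 hX
    obtain ⟨hYs, hYc⟩ := (hmem Y).1 hY
    exact (hmem _).2 ⟨contDiff_lieBracketVF hXs hYs, hXc.lieBracketVF hXs hYs hYc⟩
  · rw [LinearMap.finrank_range_of_inj (ckFieldMap_injective (by omega)), finrank_ckParams]
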